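/- Let d ≥ 1. Let η, σ ∈ ℝ^d with η_i ≥ σ_i ≥ 0 for all i; let b = (b_{ij}) be a d×d real matrix with b_{ij} ≥ 0 for i ≠ j, and c = (c_{ij}) a d×d real matrix; set γ_i(x) = Σ_{j=1}^d c_{ij} x_i x_j. Let ν be a measure on ℝ^d concentrated on {z : z_j ≥ 0 for all j} with ν({0}) = 0 and ∫ |z| dν(z) < ∞, and for each i let μ_i be a measure on ℝ^d concentrated on {z : z_j ≥ 0 for all j} with μ_i({0}) = 0 and ∫ ( z_i + Σ_{j≠i} z_j ) dμ_i(z) < ∞. Define f on the open positive orthant by f(x) = 1 + Σ_{i=1}^d (x_i − log x_i), and for x with x_i > 0 for all i define Lf(x) = Σ_{i=1}^d (η_i + Σ_{j=1}^d b_{ij} x_j + γ_i(x))·(1 − 1/x_i) + Σ_{i=1}^d σ_i/x_i + ∫ ( f(x+z) − f(x) ) dν(z) + Σ_{i=1}^d x_i ∫ ( f(x+z) − f(x) − (1 − 1/x_i) z_i ) dμ_i(z). Then all the integrals are well defined, and for every m > 0 there exists a constant K > 0 such that Lf(x) ≤ K·f(x) for every x with 0 < x_i < m for all i. -/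

import Mathlib

/-!
Since `f ≥ 1` it suffices to bound `Lf` from above on the box `(0, m)^d`. Each summand of
`f (x + z) - f x = Σⱼ (zⱼ - log (1 + zⱼ / xⱼ))` lies in `[-zⱼ / xⱼ, zⱼ]`; this makes both jump
integrands integrable and bounds the `ν`-part by `∫ Σⱼ zⱼ dν` and the `i`-th branching part by
`(m + 1) ∫ Σⱼ zⱼ dμᵢ`, the factor `xᵢ` absorbing the singular term `zᵢ / xᵢ`. In the drift, the
only terms that blow up as `xᵢ → 0` are `-(ηᵢ - σᵢ) / xᵢ` and `-Σ_{j ≠ i} bᵢⱼ xⱼ / xᵢ`, which are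
nonpositive precisely because `σᵢ ≤ ηᵢ` and `bᵢⱼ ≥ 0`; the rest is bounded on the box.
-/

open MeasureTheory Real BigOperators

open Finset

noncomputable def idSubLog (a : ℝ) : ℝ := a - Real.log a

lemma measurable_idSubLog : Measurable idSubLog :=
  measurable_id.sub Real.measurable_log

lemma one_le_idSubLog {a : ℝ} (ha : 0 < a) : 1 ≤ idSubLog a := by
  unfold idSubLog
  linarith [Real.log_le_sub_one_of_pos ha]

lemma idSubLog_add_sub_le {a t : ℝ} (ha : 0 < a) (ht : 0 ≤ t) :
    idSubLog (a + t) - idSubLog a ≤ t := by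
  unfold idSubLog
  linarith [Real.log_le_log ha (le_add_of_nonneg_right ht)]

lemma neg_div_le_idSubLog_add_sub {a t : ℝ} (ha : 0 < a) (ht : 0 ≤ t) :
    -(t / a) ≤ idSubLog (a + t) - idSubLog a := by
  have hlog : Real.log ((a + t) / a) ≤ (a + t) / a - 1 :=
    Real.log_le_sub_one_of_pos (by positivity)
  rw [Real.log_div (by positivity) ha.ne', add_div, div_self ha.ne'] at hlog
  unfold idSubLog
  linarith

lemma abs_idSubLog_add_sub_le {a t : ℝ} (ha : 0 < a) (ht : 0 ≤ t) :
    |idSubLog (a + t) - idSubLog a| ≤ (1 + 1 / a) * t := by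
  have : 0 ≤ t / a := by positivity
  rw [abs_le, add_mul, one_div_mul_eq_div, one_mul]
  constructor <;> linarith [idSubLog_add_sub_le ha ht, neg_div_le_idSubLog_add_sub ha ht]

lemma integrable_idSubLog_add_sub {α : Type*} [MeasurableSpace α] {ρ : Measure α}
    {g : α → ℝ} (hg : Integrable g ρ) (hg0 : ∀ᵐ ω ∂ρ, 0 ≤ g ω) {a : ℝ} (ha : 0 < a) :
    Integrable (fun ω => idSubLog (a + g ω) - idSubLog a) ρ := by
  refine (hg.const_mul (1 + 1 / a)).mono'
    ((measurable_idSubLog.comp_aemeasurable (hg.aemeasurable.const_add a)).sub_const _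
      |>.aestronglyMeasurable) ?_
  filter_upwards [hg0] with ω hω
  exact abs_idSubLog_add_sub_le ha hω

section EuclideanSpace

variable {ι : Type*} [Fintype ι]

noncomputable def lyapunov (x : EuclideanSpace ℝ ι) : ℝ := 1 + ∑ i, idSubLog (x i)

lemma one_le_lyapunov {x : EuclideanSpace ℝ ι} (hx : ∀ i, 0 < x i) : 1 ≤ lyapunov x :=
  le_add_of_nonneg_right <| sum_nonneg fun i _ => zero_le_one.trans (one_le_idSubLog (hx i))

lemma lyapunov_add_sub (x z : EuclideanSpace ℝ ι) :
    lyapunov (x + z) - lyapunov x = ∑ i, (idSubLog (x i + z i) - idSubLog (x i)) := by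
  simp only [lyapunov, PiLp.add_apply, sum_sub_distrib]
  ring

lemma lyapunov_add_sub_le {x z : EuclideanSpace ℝ ι} (hx : ∀ i, 0 < x i)
    (hz : ∀ i, 0 ≤ z i) : lyapunov (x + z) - lyapunov x ≤ ∑ i, z i := by
  rw [lyapunov_add_sub]
  exact sum_le_sum fun i _ => idSubLog_add_sub_le (hx i) (hz i)

variable {ρ : Measure (EuclideanSpace ℝ ι)}

lemma integrable_apply_of_integrable_norm (h : Integrable (fun z => ‖z‖) ρ) (i : ι) :
    Integrable (fun z : EuclideanSpace ℝ ι => z i) ρ :=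
  h.mono' (EuclideanSpace.proj i).continuous.aestronglyMeasurable
    (ae_of_all _ fun z => PiLp.norm_apply_le z i)

lemma integrable_apply_of_integrable_sum (hρ : ∀ᵐ z ∂ρ, ∀ j, 0 ≤ z j)
    (h : Integrable (fun z : EuclideanSpace ℝ ι => ∑ j, z j) ρ) (i : ι) :
    Integrable (fun z : EuclideanSpace ℝ ι => z i) ρ := by
  refine h.mono' (EuclideanSpace.proj i).continuous.aestronglyMeasurable ?_
  filter_upwards [hρ] with z hz
  rw [Real.norm_eq_abs, abs_of_nonneg (hz i)]
  exact single_le_sum (fun j _ => hz j) (mem_univ i)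

lemma integrable_lyapunov_add_sub (hρ : ∀ᵐ z ∂ρ, ∀ j, 0 ≤ z j)
    (hint : ∀ j, Integrable (fun z : EuclideanSpace ℝ ι => z j) ρ)
    {x : EuclideanSpace ℝ ι} (hx : ∀ i, 0 < x i) :
    Integrable (fun z => lyapunov (x + z) - lyapunov x) ρ := by
  simp_rw [lyapunov_add_sub]
  exact integrable_finsetSum _ fun i _ =>
    integrable_idSubLog_add_sub (hint i) (hρ.mono fun z hz => hz i) (hx i)

lemma integral_lyapunov_add_sub_le (hρ : ∀ᵐ z ∂ρ, ∀ j, 0 ≤ z j)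
    (hint : ∀ j, Integrable (fun z : EuclideanSpace ℝ ι => z j) ρ)
    {x : EuclideanSpace ℝ ι} (hx : ∀ i, 0 < x i) :
    ∫ z, (lyapunov (x + z) - lyapunov x) ∂ρ ≤ ∫ z, ∑ j, z j ∂ρ :=
  integral_mono_ae (integrable_lyapunov_add_sub hρ hint hx)
    (integrable_finsetSum _ fun j _ => hint j) (hρ.mono fun _ hz => lyapunov_add_sub_le hx hz)

lemma mul_lyapunov_branching_le {x z : EuclideanSpace ℝ ι} {m : ℝ} {i : ι}
    (hx : ∀ j, 0 < x j) (hxm : x i ≤ m) (hz : ∀ j, 0 ≤ z j) :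
    x i * (lyapunov (x + z) - lyapunov x - (1 - 1 / x i) * z i) ≤ (m + 1) * ∑ j, z j := by
  have hΔ := lyapunov_add_sub_le hx hz
  have hzi : z i ≤ ∑ j, z j := single_le_sum (fun j _ => hz j) (mem_univ i)
  have hcancel : x i * ((1 - 1 / x i) * z i) = x i * z i - z i := by
    field_simp [(hx i).ne']
  rw [mul_sub, hcancel]
  nlinarith [hx i, hz i]

lemma mul_integral_lyapunov_branching_le (hρ : ∀ᵐ z ∂ρ, ∀ j, 0 ≤ z j)
    (hint : ∀ j, Integrable (fun z : EuclideanSpace ℝ ι => z j) ρ)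
    {x : EuclideanSpace ℝ ι} {m : ℝ} {i : ι} (hx : ∀ j, 0 < x j) (hxm : x i ≤ m) :
    x i * ∫ z, (lyapunov (x + z) - lyapunov x - (1 - 1 / x i) * z i) ∂ρ
      ≤ (m + 1) * ∫ z, ∑ j, z j ∂ρ := by
  rw [← integral_const_mul, ← integral_const_mul]
  refine integral_mono_ae ?_ ?_ (hρ.mono fun z hz => mul_lyapunov_branching_le hx hxm hz)
  · exact ((integrable_lyapunov_add_sub hρ hint hx).sub ((hint i).const_mul _)).const_mul _
  · exact (integrable_finsetSum _ fun j _ => hint j).const_mul _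

end EuclideanSpace

lemma sum_mul_le_sum_abs_mul {ι : Type*} (s : Finset ι) (a y : ι → ℝ) {M : ℝ}
    (hy : ∀ j ∈ s, |y j| ≤ M) : ∑ j ∈ s, a j * y j ≤ ∑ j ∈ s, |a j| * M :=
  sum_le_sum fun j hj => (le_abs_self _).trans <| by
    rw [abs_mul]; exact mul_le_mul_of_nonneg_left (hy j hj) (abs_nonneg _)

section Drift

variable {ι : Type*} [Fintype ι] {x : ι → ℝ} {i : ι}

lemma immigration_drift_le {η σ a : ℝ} (hση : σ ≤ η) (ha : 0 < a) :
    η * (1 - 1 / a) + σ / a ≤ η := by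
  have : 0 ≤ (η - σ) / a := div_nonneg (sub_nonneg.2 hση) ha.le
  have : η * (1 - 1 / a) + σ / a = η - (η - σ) / a := by ring
  linarith

lemma linear_drift_le [DecidableEq ι] {b : ι → ℝ} (hb : ∀ j, i ≠ j → 0 ≤ b j)
    (hx : ∀ j, 0 < x j) :
    (∑ j, b j * x j) * (1 - 1 / x i) ≤ ∑ j, b j * x j - b i := by
  have hdiag : b i * x i ≤ ∑ j, b j * x j := by
    rw [← add_sum_erase _ _ (mem_univ i)]
    exact le_add_of_nonneg_right <| sum_nonneg fun j hj =>
      mul_nonneg (hb j (ne_of_mem_erase hj).symm) (hx j).le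
  have : b i ≤ (∑ j, b j * x j) / x i := (le_div_iff₀ (hx i)).2 hdiag
  rw [mul_sub, mul_one, mul_one_div]
  linarith

lemma interaction_drift_eq (c : ι → ℝ) (hxi : x i ≠ 0) :
    (∑ j, c j * x i * x j) * (1 - 1 / x i) = ∑ j, c j * (x j * (x i - 1)) := by
  rw [sum_mul]
  refine sum_congr rfl fun j _ => ?_
  field_simp

lemma cimbi_drift_le {η σ m : ℝ} {b c : ι → ℝ} (hση : σ ≤ η) (hb : ∀ j, i ≠ j → 0 ≤ b j)
    (hx : ∀ j, 0 < x j ∧ x j < m) :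
    (η + ∑ j, b j * x j + ∑ j, c j * x i * x j) * (1 - 1 / x i) + σ / x i
      ≤ η + ∑ j, |b j| * m - b i + ∑ j, |c j| * (m * (m + 1)) := by
  have hx0 j := (hx j).1
  have hm : 0 < m := (hx i).1.trans (hx i).2
  have himm := immigration_drift_le hση (hx0 i)
  have hlin := by classical exact linear_drift_le hb hx0
  have hb_le := sum_mul_le_sum_abs_mul univ b x fun j _ => by
    rw [abs_of_pos (hx0 j)]; exact (hx j).2.le
  have hc_le := sum_mul_le_sum_abs_mul (M := m * (m + 1)) univ c (fun j => x j * (x i - 1))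
    fun j _ => by
      rw [abs_mul, abs_of_pos (hx0 j)]
      exact mul_le_mul (hx j).2.le
        (abs_sub_le_iff.2 ⟨by linarith [(hx i).2], by linarith [hx0 i]⟩) (abs_nonneg _) hm.le
  rw [add_mul, add_mul, interaction_drift_eq c (hx0 i).ne']
  linarith

end Drift

theorem cimbi_foster_lyapunov_critical_general
    (d : ℕ)
    (η σ : Fin d → ℝ) (hησ : ∀ i, 0 ≤ σ i ∧ σ i ≤ η i)
    (b c : Matrix (Fin d) (Fin d) ℝ)
    (hb : ∀ i j, i ≠ j → 0 ≤ b i j)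
    (γ : EuclideanSpace ℝ (Fin d) → Fin d → ℝ)
    (hγ : ∀ (x : EuclideanSpace ℝ (Fin d)) (i : Fin d),
      γ x i = ∑ j, c i j * x i * x j)
    (ν : Measure (EuclideanSpace ℝ (Fin d)))
    (hν : ∀ᵐ z ∂ν, ∀ j, 0 ≤ z j)
    (hνint : Integrable (fun z => ‖z‖) ν)
    (μ : Fin d → Measure (EuclideanSpace ℝ (Fin d)))
    (hμ : ∀ i, ∀ᵐ z ∂(μ i), ∀ j, 0 ≤ z j)
    (hμint : ∀ i, Integrable
      (fun z => z i + ∑ j ∈ Finset.univ.erase i, z j) (μ i))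
    (f : EuclideanSpace ℝ (Fin d) → ℝ)
    (hf : ∀ x : EuclideanSpace ℝ (Fin d), f x = 1 + ∑ i, (x i - Real.log (x i)))
    (Lf : EuclideanSpace ℝ (Fin d) → ℝ)
    (hLf : ∀ x : EuclideanSpace ℝ (Fin d), (∀ i, 0 < x i) →
      Lf x = ∑ i, (η i + (∑ j, b i j * x j) + γ x i) * (1 - 1 / x i)
        + ∑ i, σ i / x i
        + ∫ z, (f (x + z) - f x) ∂ν
        + ∑ i, x i * ∫ z, (f (x + z) - f x - (1 - 1 / x i) * z i) ∂(μ i)) :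
    (∀ x : EuclideanSpace ℝ (Fin d), (∀ i, 0 < x i) →
      Integrable (fun z => f (x + z) - f x) ν ∧
      ∀ i, Integrable (fun z => f (x + z) - f x - (1 - 1 / x i) * z i) (μ i)) ∧
    ∀ m > (0 : ℝ), ∃ K > (0 : ℝ), ∀ x : EuclideanSpace ℝ (Fin d),
      (∀ i, 0 < x i ∧ x i < m) → Lf x ≤ K * f x := by
  obtain rfl : f = lyapunov := funext hf
  have hν_coord := integrable_apply_of_integrable_norm hνint
  have hμ_coord i := integrable_apply_of_integrable_sum (hμ i) <| (hμint i).congr <|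
    ae_of_all _ fun z => add_sum_erase _ (fun j => z j) (mem_univ i)
  refine ⟨fun x hx => ⟨integrable_lyapunov_add_sub hν hν_coord hx, fun i =>
    (integrable_lyapunov_add_sub (hμ i) (hμ_coord i) hx).sub ((hμ_coord i i).const_mul _)⟩,
    fun m _ => ?_⟩
  set K₀ := ∑ i, (η i + ∑ j, |b i j| * m - b i i + ∑ j, |c i j| * (m * (m + 1)))
    + ∫ z, ∑ j, z j ∂ν + ∑ i, (m + 1) * ∫ z, ∑ j, z j ∂(μ i)
  refine ⟨max K₀ 1, by positivity, fun x hx => ?_⟩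
  have hx0 i : 0 < x i := (hx i).1
  have hdrift := sum_le_sum fun i (_ : i ∈ univ) =>
    hγ x i ▸ cimbi_drift_le (c := c i) (hησ i).2 (hb i) hx
  have hbranch := sum_le_sum fun i (_ : i ∈ univ) =>
    mul_integral_lyapunov_branching_le (m := m) (i := i) (hμ i) (hμ_coord i) hx0 (hx i).2.le
  have hLf_le : Lf x ≤ K₀ := by
    rw [sum_add_distrib] at hdrift
    rw [hLf x hx0]
    linarith [integral_lyapunov_add_sub_le hν hν_coord hx0]
  calc Lf x ≤ max K₀ 1 := hLf_le.trans (le_max_left _ _)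
    _ ≤ max K₀ 1 * lyapunov x := le_mul_of_one_le_right (by positivity) (one_le_lyapunov hx0)

/-- Foster–Lyapunov inequality `Lf ≤ K·f` on `(0,m)^d` for the generator of a
CIMBI process applied to `f(x) = 1 + Σᵢ (xᵢ − log xᵢ)`, in the critical case `ηᵢ ≥ σᵢ`, where the branching Lévy measures
have finite first moments in their own coordinate. -/
theorem cimbi_foster_lyapunov_critical
    (d : ℕ) (hd : 1 ≤ d)
    (η σ : Fin d → ℝ) (hησ : ∀ i, 0 ≤ σ i ∧ σ i ≤ η i)
    (b c : Matrix (Fin d) (Fin d) ℝ)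
    (hb : ∀ i j, i ≠ j → 0 ≤ b i j)
    (γ : EuclideanSpace ℝ (Fin d) → Fin d → ℝ)
    (hγ : ∀ (x : EuclideanSpace ℝ (Fin d)) (i : Fin d),
      γ x i = ∑ j, c i j * x i * x j)
    (ν : Measure (EuclideanSpace ℝ (Fin d)))
    (hν : ∀ᵐ z ∂ν, ∀ j, 0 ≤ z j)
    (hν0 : ν ({0} : Set (EuclideanSpace ℝ (Fin d))) = 0)
    (hνint : Integrable (fun z => ‖z‖) ν)
    (μ : Fin d → Measure (EuclideanSpace ℝ (Fin d)))
    (hμ : ∀ i, ∀ᵐ z ∂(μ i), ∀ j, 0 ≤ z j)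
    (hμ0 : ∀ i, μ i ({0} : Set (EuclideanSpace ℝ (Fin d))) = 0)
    (hμint : ∀ i, Integrable
      (fun z => z i + ∑ j ∈ Finset.univ.erase i, z j) (μ i))
    (f : EuclideanSpace ℝ (Fin d) → ℝ)
    (hf : ∀ x : EuclideanSpace ℝ (Fin d), f x = 1 + ∑ i, (x i - Real.log (x i)))
    (Lf : EuclideanSpace ℝ (Fin d) → ℝ)
    (hLf : ∀ x : EuclideanSpace ℝ (Fin d), (∀ i, 0 < x i) →
      Lf x = ∑ i, (η i + (∑ j, b i j * x j) + γ x i) * (1 - 1 / x i)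
        + ∑ i, σ i / x i
        + ∫ z, (f (x + z) - f x) ∂ν
        + ∑ i, x i * ∫ z, (f (x + z) - f x - (1 - 1 / x i) * z i) ∂(μ i)) :
    (∀ x : EuclideanSpace ℝ (Fin d), (∀ i, 0 < x i) →
      Integrable (fun z => f (x + z) - f x) ν ∧
      ∀ i, Integrable (fun z => f (x + z) - f x - (1 - 1 / x i) * z i) (μ i)) ∧
    ∀ m > (0 : ℝ), ∃ K > (0 : ℝ), ∀ x : EuclideanSpace ℝ (Fin d),
      (∀ i, 0 < x i ∧ x i < m) → Lf x ≤ K * f x :=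
  cimbi_foster_lyapunov_critical_general d η σ hησ b c hb γ hγ ν hν hνint μ hμ hμint f hf Lf hLf
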